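/- arXiv:2111.10883 — 2 statements merged into one kernel-verified Lean document; each statement's English description precedes it below -/
import Mathlib

section
/- If φ : 𝔻 → 𝔻 is analytic with φ(0) = 0 and power series φ(z) = Σ_{n≥1} c_n z^n, then for every r with 0 ≤ r ≤ 1/3 and every z with |z| = r, the majorant series satisfies Σ_{n=1}^∞ |c_n| r^n ≤ r. -/
open Metric

noncomputable def majorant (a : ℕ → ℂ) (r : ℝ) : ENNReal :=
  ∑' n, (‖a n‖₊ : ENNReal) * (ENNReal.ofReal r) ^ n

open Complex ComplexConjugate Filter Topology Set

/-!
Since `φ 0 = 0`, `φ z = z g(z)` with `g = dslope φ 0`, which is bounded by `1` by the Schwarz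
lemma and has coefficients `b n = c (n + 1)`; thus `M_r(φ) = r M_r(g)`. Averaging `g` over the
rotations by `n`-th roots of unity gives `Σ b (n j) z^(n j)`, a function of `z^n` bounded by `1`,
and Schwarz–Pick applied to it yields Wiener's inequality `‖b n‖ ≤ 1 - ‖b 0‖²` for `n ≥ 1`.
Hence, with `a = ‖b 0‖` and `r ≤ 1/3`,
`M_r(g) ≤ a + (1 - a²) r / (1 - r) ≤ a + (1 - a²) / 2 = 1 - (1 - a)² / 2 ≤ 1`.
-/

section PowerSeries

variable {b : ℕ → ℂ} {f : ℂ → ℂ}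

theorem hasFPowerSeriesOnBall_ofScalars_of_hasSum
    (h : ∀ z ∈ ball (0 : ℂ) 1, HasSum (fun n => b n * z ^ n) (f z)) :
    HasFPowerSeriesOnBall f (FormalMultilinearSeries.ofScalars ℂ b) 0 1 where
  r_le := by
    refine ENNReal.le_of_forall_nnreal_lt fun r hr => ?_
    refine FormalMultilinearSeries.le_radius_of_summable _ ?_
    have hr1 : ((r : ℝ) : ℂ) ∈ ball (0 : ℂ) 1 := by simpa using hr
    simpa [FormalMultilinearSeries.ofScalars_norm] using (h _ hr1).summable.norm
  r_pos := one_pos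
  hasSum {y} hy := by
    rw [← ENNReal.coe_one, eball_coe, NNReal.coe_one] at hy
    simpa [FormalMultilinearSeries.ofScalars_apply_eq, mul_comm] using h y (by simpa using hy)

theorem differentiableOn_of_hasSum
    (h : ∀ z ∈ ball (0 : ℂ) 1, HasSum (fun n => b n * z ^ n) (f z)) :
    DifferentiableOn ℂ f (ball 0 1) := by
  simpa [← ENNReal.coe_one, eball_coe] using
    (hasFPowerSeriesOnBall_ofScalars_of_hasSum h).differentiableOn

theorem apply_zero_eq_of_hasSum
    (h : ∀ z ∈ ball (0 : ℂ) 1, HasSum (fun n => b n * z ^ n) (f z)) : f 0 = b 0 :=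
  (h 0 (mem_ball_self one_pos)).unique <| by
    simpa using hasSum_single (f := fun n => b n * 0 ^ n) 0 fun n hn => by simp [hn]

theorem deriv_zero_eq_of_hasSum
    (h : ∀ z ∈ ball (0 : ℂ) 1, HasSum (fun n => b n * z ^ n) (f z)) : deriv f 0 = b 1 := by
  rw [(hasFPowerSeriesOnBall_ofScalars_of_hasSum h).hasFPowerSeriesAt.deriv]
  simp

theorem hasSum_dslope_zero_of_hasSum
    (h : ∀ z ∈ ball (0 : ℂ) 1, HasSum (fun n => b n * z ^ n) (f z)) :
    ∀ z ∈ ball (0 : ℂ) 1, HasSum (fun n => b (n + 1) * z ^ n) (dslope f 0 z) := by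
  intro z hz
  rcases eq_or_ne z 0 with rfl | hz0
  · simpa [deriv_zero_eq_of_hasSum h] using
      hasSum_single (f := fun n => b (n + 1) * 0 ^ n) 0 fun n hn => by simp [hn]
  · have hshift := (hasSum_nat_add_iff' 1).mpr (h z hz)
    rw [dslope_of_ne _ hz0, slope_def_field, apply_zero_eq_of_hasSum h, sub_zero]
    simp only [Finset.range_one, Finset.sum_singleton, pow_zero, mul_one] at hshift
    refine (hshift.div_const z).congr_fun fun n => ?_
    rw [pow_succ, ← mul_assoc, mul_div_cancel_right₀ _ hz0]

end PowerSeries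

theorem one_sub_conj_mul_ne_zero {a w : ℂ} (ha : ‖a‖ < 1) (hw : ‖w‖ < 1) :
    1 - conj a * w ≠ 0 := fun h => by
  have : ‖conj a * w‖ < 1 := by
    rw [norm_mul, RCLike.norm_conj]
    nlinarith [norm_nonneg a, norm_nonneg w]
  simp [← sub_eq_zero.mp h] at this

theorem norm_sub_div_one_sub_conj_mul_lt_one {a w : ℂ} (ha : ‖a‖ < 1) (hw : ‖w‖ < 1) :
    ‖(w - a) / (1 - conj a * w)‖ < 1 := by
  have hden : 0 < ‖1 - conj a * w‖ := norm_pos_iff.mpr (one_sub_conj_mul_ne_zero ha hw)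
  have key : ‖1 - conj a * w‖ ^ 2 - ‖w - a‖ ^ 2 = (1 - ‖a‖ ^ 2) * (1 - ‖w‖ ^ 2) := by
    simp only [← normSq_eq_norm_sq, normSq_apply, sub_re, sub_im, one_re, one_im, mul_re, mul_im,
      conj_re, conj_im]
    ring
  rw [norm_div, div_lt_one hden, ← sq_lt_sq₀ (norm_nonneg _) hden.le]
  nlinarith [mul_pos (by nlinarith [norm_nonneg a] : (0 : ℝ) < 1 - ‖a‖ ^ 2)
    (by nlinarith [norm_nonneg w] : (0 : ℝ) < 1 - ‖w‖ ^ 2)]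

theorem norm_deriv_zero_le_one_sub_norm_sq {f : ℂ → ℂ} (hd : DifferentiableOn ℂ f (ball 0 1))
    (hf : MapsTo f (ball 0 1) (ball 0 1)) : ‖deriv f 0‖ ≤ 1 - ‖f 0‖ ^ 2 := by
  set a := f 0
  have ha : ‖a‖ < 1 := mem_ball_zero_iff.mp (hf (mem_ball_self one_pos))
  set m : ℂ → ℂ := fun w => (w - a) / (1 - conj a * w)
  have hm : DifferentiableOn ℂ m (ball 0 1) := fun w hw =>
    ((differentiableAt_id.sub_const a).div ((differentiableAt_const 1).sub
      ((differentiableAt_const _).mul differentiableAt_id))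
      (one_sub_conj_mul_ne_zero ha (mem_ball_zero_iff.mp hw))).differentiableWithinAt
  have hma : HasDerivAt m ((1 - ‖a‖ ^ 2 : ℝ) : ℂ)⁻¹ a := by
    have hconj : conj a * a = (‖a‖ ^ 2 : ℝ) := by
      rw [mul_comm, mul_conj, normSq_eq_norm_sq]
    refine (((hasDerivAt_id a).sub_const a).div
      (((hasDerivAt_id a).const_mul (conj a)).const_sub 1)
      (one_sub_conj_mul_ne_zero ha ha)).congr_deriv ?_
    have : (1 : ℂ) - conj a * a ≠ 0 := one_sub_conj_mul_ne_zero ha ha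
    simp only [id, sub_self, zero_mul, sub_zero, mul_one, one_mul, hconj] at this ⊢
    push_cast at this ⊢
    field_simp
  have hmf : MapsTo (m ∘ f) (ball 0 1) (closedBall ((m ∘ f) 0) 1) := fun w hw => by
    simpa [m, a] using (norm_sub_div_one_sub_conj_mul_lt_one ha (mem_ball_zero_iff.mp (hf hw))).le
  have := norm_deriv_le_one_of_mapsTo_ball (hm.comp hd hf) hmf one_pos
  rw [deriv_comp _ (hma.differentiableAt) (hd.differentiableAt (ball_mem_nhds 0 one_pos)),
    hma.deriv, norm_mul, norm_inv, norm_real, Real.norm_of_nonneg, inv_mul_le_iff₀] at this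
  all_goals nlinarith [norm_nonneg a]

theorem norm_deriv_zero_le_one_sub_norm_sq_of_mapsTo_closedBall {f : ℂ → ℂ}
    (hd : DifferentiableOn ℂ f (ball 0 1)) (hf : MapsTo f (ball 0 1) (closedBall 0 1)) :
    ‖deriv f 0‖ ≤ 1 - ‖f 0‖ ^ 2 := by
  -- `t • f` maps into the open disk for `t < 1`; let `t → 1`.
  have hscaled : ∀ t ∈ Ioo (0 : ℝ) 1, t * ‖deriv f 0‖ ≤ 1 - t ^ 2 * ‖f 0‖ ^ 2 := by
    rintro t ⟨ht0, ht1⟩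
    have hmaps : MapsTo (fun z => (t : ℂ) * f z) (ball 0 1) (ball 0 1) := fun z hz => by
      have := mem_closedBall_zero_iff.mp (hf hz)
      rw [mem_ball_zero_iff, norm_mul, norm_real, Real.norm_of_nonneg ht0.le]
      nlinarith
    have := norm_deriv_zero_le_one_sub_norm_sq (hd.const_mul (t : ℂ)) hmaps
    rwa [deriv_const_mul _ (hd.differentiableAt (ball_mem_nhds 0 one_pos)), norm_mul, norm_mul,
      norm_real, Real.norm_of_nonneg ht0.le, mul_pow] at this
  have hcont : Continuous fun t : ℝ => 1 - t ^ 2 * ‖f 0‖ ^ 2 - t * ‖deriv f 0‖ := by fun_prop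
  have : (0 : ℝ) ≤ 1 - 1 ^ 2 * ‖f 0‖ ^ 2 - 1 * ‖deriv f 0‖ :=
    ge_of_tendsto (hcont.continuousWithinAt (s := Iio 1) (x := 1)) <| by
      filter_upwards [Ioo_mem_nhdsLT one_pos] with t ht
      linarith [hscaled t ht]
  linarith

theorem IsPrimitiveRoot.sum_range_pow_mul_eq_ite {R : Type*} [CommRing R] [IsDomain R] {ζ : R}
    {n : ℕ} (hζ : IsPrimitiveRoot ζ n) (m : ℕ) :
    ∑ k ∈ Finset.range n, ζ ^ (k * m) = if n ∣ m then (n : R) else 0 := by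
  simp_rw [mul_comm _ m, pow_mul]
  split_ifs with hnm
  · simp [(hζ.pow_eq_one_iff_dvd m).mpr hnm]
  · have hne : ζ ^ m - 1 ≠ 0 := sub_ne_zero.mpr fun h => hnm ((hζ.pow_eq_one_iff_dvd m).mp h)
    have hpow : (ζ ^ m) ^ n = 1 := by rw [← pow_mul, mul_comm, pow_mul, hζ.pow_eq_one, one_pow]
    have := geom_sum_mul (ζ ^ m) n
    rw [hpow, sub_self] at this
    exact (mul_eq_zero.mp this).resolve_right hne

theorem IsPrimitiveRoot.norm_pow_mul {ζ : ℂ} {n : ℕ} (hζ : IsPrimitiveRoot ζ n) (hn : n ≠ 0)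
    (k : ℕ) (u : ℂ) : ‖ζ ^ k * u‖ = ‖u‖ := by
  rw [norm_mul, norm_pow, hζ.norm'_eq_one hn, one_pow, one_mul]

theorem IsPrimitiveRoot.hasSum_coeff_nat_mul_eq_average {b : ℕ → ℂ} {g : ℂ → ℂ} {ζ : ℂ} {n : ℕ}
    (hζ : IsPrimitiveRoot ζ n) (hn : n ≠ 0)
    (h : ∀ z ∈ ball (0 : ℂ) 1, HasSum (fun m => b m * z ^ m) (g z)) {u : ℂ} (hu : ‖u‖ < 1) :
    HasSum (fun j => b (n * j) * (u ^ n) ^ j) ((∑ k ∈ Finset.range n, g (ζ ^ k * u)) / n) := by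
  have hrot : ∀ k : ℕ, ζ ^ k * u ∈ ball (0 : ℂ) 1 := fun k => by
    rwa [mem_ball_zero_iff, hζ.norm_pow_mul hn]
  have havg := (hasSum_sum (s := Finset.range n) fun k _ => h _ (hrot k)).div_const (n : ℂ)
  have hterm : ∀ m, (∑ k ∈ Finset.range n, b m * (ζ ^ k * u) ^ m) / n
      = if n ∣ m then b m * u ^ m else 0 := fun m => by
    simp_rw [mul_pow, ← pow_mul, mul_left_comm (b m), ← Finset.sum_mul,
      hζ.sum_range_pow_mul_eq_ite m]
    split_ifs
    · field_simp
    · simp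
  simp_rw [hterm] at havg
  have hsupp : ∀ m ∉ range (n * ·), (if n ∣ m then b m * u ^ m else 0) = 0 := fun m hm =>
    if_neg fun ⟨j, hj⟩ => hm ⟨j, hj.symm⟩
  refine ((mul_right_injective₀ hn).hasSum_iff hsupp).mpr havg |>.congr_fun fun j => ?_
  simp [pow_mul]

theorem exists_hasSum_coeff_nat_mul_norm_le_one {b : ℕ → ℂ} {g : ℂ → ℂ} {n : ℕ} (hn : n ≠ 0)
    (h : ∀ z ∈ ball (0 : ℂ) 1, HasSum (fun m => b m * z ^ m) (g z))
    (hg : ∀ z ∈ ball (0 : ℂ) 1, ‖g z‖ ≤ 1) {w : ℂ} (hw : ‖w‖ < 1) :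
    ∃ s, HasSum (fun j => b (n * j) * w ^ j) s ∧ ‖s‖ ≤ 1 := by
  obtain ⟨u, rfl⟩ := IsAlgClosed.exists_pow_nat_eq w (Nat.pos_of_ne_zero hn)
  have hu : ‖u‖ < 1 := by
    rw [norm_pow] at hw
    exact (pow_lt_one_iff_of_nonneg (norm_nonneg u) hn).mp hw
  have hζ := Complex.isPrimitiveRoot_exp n hn
  refine ⟨_, hζ.hasSum_coeff_nat_mul_eq_average hn h hu, ?_⟩
  rw [norm_div, norm_natCast, div_le_one (by positivity)]
  calc ‖∑ k ∈ Finset.range n, g (_ ^ k * u)‖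
      ≤ ∑ k ∈ Finset.range n, ‖g (_ ^ k * u)‖ := norm_sum_le _ _
    _ ≤ ∑ k ∈ Finset.range n, 1 := Finset.sum_le_sum fun k _ => hg _ <| by
        rwa [mem_ball_zero_iff, hζ.norm_pow_mul hn]
    _ = n := by simp

theorem norm_coeff_le_one_sub_norm_sq {b : ℕ → ℂ} {g : ℂ → ℂ}
    (h : ∀ z ∈ ball (0 : ℂ) 1, HasSum (fun m => b m * z ^ m) (g z))
    (hg : ∀ z ∈ ball (0 : ℂ) 1, ‖g z‖ ≤ 1) {n : ℕ} (hn : n ≠ 0) : ‖b n‖ ≤ 1 - ‖b 0‖ ^ 2 := by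
  set H : ℂ → ℂ := fun w => ∑' j, b (n * j) * w ^ j
  have hH : ∀ w ∈ ball (0 : ℂ) 1, HasSum (fun j => b (n * j) * w ^ j) (H w) := fun w hw => by
    obtain ⟨s, hs, -⟩ := exists_hasSum_coeff_nat_mul_norm_le_one hn h hg (mem_ball_zero_iff.mp hw)
    exact hs.summable.hasSum
  have hH1 : MapsTo H (ball 0 1) (closedBall 0 1) := fun w hw => by
    obtain ⟨s, hs, hs1⟩ := exists_hasSum_coeff_nat_mul_norm_le_one hn h hg (mem_ball_zero_iff.mp hw)
    rwa [mem_closedBall_zero_iff, (hH w hw).unique hs]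
  simpa [apply_zero_eq_of_hasSum hH, deriv_zero_eq_of_hasSum hH] using
    norm_deriv_zero_le_one_sub_norm_sq_of_mapsTo_closedBall (differentiableOn_of_hasSum hH) hH1

theorem majorant_le_ofReal_of_sum_range_le {a : ℕ → ℂ} {r M : ℝ} (hr : 0 ≤ r)
    (h : ∀ N, ∑ n ∈ Finset.range N, ‖a n‖ * r ^ n ≤ M) : majorant a r ≤ ENNReal.ofReal M := by
  refine ENNReal.tsum_le_of_sum_range_le fun N => ?_
  have : ∑ n ∈ Finset.range N, (‖a n‖₊ : ENNReal) * ENNReal.ofReal r ^ n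
      = ENNReal.ofReal (∑ n ∈ Finset.range N, ‖a n‖ * r ^ n) := by
    rw [ENNReal.ofReal_sum_of_nonneg fun n _ => by positivity]
    refine Finset.sum_congr rfl fun n _ => ?_
    rw [ENNReal.ofReal_mul (norm_nonneg _), ENNReal.ofReal_pow hr, ofReal_norm, enorm_eq_nnnorm]
  rw [this]
  exact ENNReal.ofReal_le_ofReal (h N)

theorem majorant_eq_ofReal_mul_majorant_succ {a : ℕ → ℂ} (ha : a 0 = 0) (r : ℝ) :
    majorant a r = ENNReal.ofReal r * majorant (fun n => a (n + 1)) r := by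
  unfold majorant
  rw [tsum_eq_zero_add' ENNReal.summable, ← ENNReal.tsum_mul_left, ha, nnnorm_zero,
    ENNReal.coe_zero, zero_mul, zero_add]
  congr 1 with n
  ring

theorem majorant_le_one_of_norm_le_one_sub_norm_sq {b : ℕ → ℂ}
    (hb : ∀ n, n ≠ 0 → ‖b n‖ ≤ 1 - ‖b 0‖ ^ 2) {r : ℝ} (hr0 : 0 ≤ r) (hr : r ≤ 1 / 3) :
    majorant b r ≤ 1 := by
  set a := ‖b 0‖
  have ha : a ≤ 1 := by nlinarith [hb 1 one_ne_zero, norm_nonneg (b 1), norm_nonneg (b 0)]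
  rw [← ENNReal.ofReal_one]
  refine majorant_le_ofReal_of_sum_range_le hr0 fun N => ?_
  rcases N with _ | N
  · simp
  rw [Finset.range_eq_Ico, Finset.sum_eq_sum_Ico_succ_bot (Nat.succ_pos N)]
  have htail : ∑ n ∈ Finset.Ico 1 (N + 1), ‖b n‖ * r ^ n ≤ (1 - a ^ 2) * (r / (1 - r)) := by
    calc ∑ n ∈ Finset.Ico 1 (N + 1), ‖b n‖ * r ^ n
        ≤ ∑ n ∈ Finset.Ico 1 (N + 1), (1 - a ^ 2) * r ^ n :=
          Finset.sum_le_sum fun n hn => mul_le_mul_of_nonneg_right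
            (hb n (Nat.one_le_iff_ne_zero.mp (Finset.mem_Ico.mp hn).1)) (by positivity)
      _ ≤ (1 - a ^ 2) * (r / (1 - r)) := by
          rw [← Finset.mul_sum]
          gcongr
          · nlinarith [norm_nonneg (b 0)]
          · simpa using geom_sum_Ico_le_of_lt_one hr0 (by linarith) (m := 1) (n := N + 1)
  have hr' : r / (1 - r) ≤ 1 / 2 := by
    rw [div_le_iff₀ (by linarith)]
    linarith
  simp only [pow_zero, mul_one]
  nlinarith [mul_le_mul_of_nonneg_left hr' (by nlinarith [norm_nonneg (b 0)] : 0 ≤ 1 - a ^ 2)]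

theorem bohr_operator_schwarz (φ : ℂ → ℂ) (c : ℕ → ℂ)
    (hmap : ∀ z ∈ ball (0:ℂ) 1, φ z ∈ ball (0:ℂ) 1)
    (hφ0 : φ 0 = 0)
    (hsum : ∀ z ∈ ball (0:ℂ) 1, HasSum (fun n => c n * z ^ n) (φ z)) :
    ∀ r : ℝ, 0 ≤ r → r ≤ 1/3 → majorant c r ≤ ENNReal.ofReal r := by
  intro r hr0 hr
  have hc0 : c 0 = 0 := (apply_zero_eq_of_hasSum hsum).symm.trans hφ0
  have hslope := hasSum_dslope_zero_of_hasSum hsum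
  have hslope_le : ∀ z ∈ ball (0 : ℂ) 1, ‖dslope φ 0 z‖ ≤ 1 := fun z hz => by
    have hmaps : MapsTo φ (ball 0 1) (closedBall (φ 0) 1) := fun w hw => by
      rw [hφ0]
      exact ball_subset_closedBall (hmap w hw)
    simpa using norm_dslope_le_div_of_mapsTo_ball (differentiableOn_of_hasSum hsum) hmaps hz
  calc majorant c r = ENNReal.ofReal r * majorant (fun n => c (n + 1)) r :=
        majorant_eq_ofReal_mul_majorant_succ hc0 r
    _ ≤ ENNReal.ofReal r * 1 := by
        gcongr
        exact majorant_le_one_of_norm_le_one_sub_norm_sq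
          (fun n hn => norm_coeff_le_one_sub_norm_sq (n := n) hslope hslope_le hn) hr0 hr
    _ = ENNReal.ofReal r := mul_one _
end

section
/- Let g : 𝔻 → ℂ be convex univalent and f₀ analytic on 𝔻 subordinate to g with f₀(0) = g(0) = 0, f₀(z) = Σ_{n≥1} a_n z^n. Then |a_n| ≤ |g'(0)| for every n ≥ 1, and consequently M_r(f₀) ≤ |g'(0)|·r/(1−r) for all r ∈ [0,1). -/
/-!
Averaging `f₀` over the rotations `z ↦ εᵏ z` by the `n`-th roots of unity keeps only the
coefficients `a_{nj}`, so `G(w) = Σⱼ a_{nj} wʲ` satisfies `G(zⁿ) = (1/n) Σₖ f₀(εᵏ z)`. Since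
`f₀(𝔻) ⊆ g(𝔻)` and `g(𝔻)` is convex, `G` maps `𝔻` into `g(𝔻)` as well, and `G(0) = g(0)`.
The inverse of the univalent map `g` is holomorphic, so the Schwarz lemma applied to `g⁻¹ ∘ G`
gives `|a_n| = |G'(0)| ≤ |g'(0)|`. Summing the geometric series bounds the majorant.
-/

open Metric

open Filter Set Function Topology

section InverseOfInjective

variable {U : Set ℂ} {g : ℂ → ℂ}

theorem not_eventually_eq_of_injOn {z : ℂ} (hU : U ∈ 𝓝 z) (hinj : InjOn g U) :
    ¬ ∀ᶠ w in 𝓝 z, g w = g z := by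
  intro h
  have hfalse : ∀ᶠ w in 𝓝[≠] z, False := by
    filter_upwards [nhdsWithin_le_nhds (h.and hU), self_mem_nhdsWithin] with w ⟨hw, hwU⟩ hne
    exact hne (hinj hwU (mem_of_mem_nhds hU) hw)
  exact hfalse.exists.elim fun _ ↦ id

theorem isOpen_image_of_injOn (hg : DifferentiableOn ℂ g U) (hU : IsOpen U) (hinj : InjOn g U)
    {s : Set ℂ} (hs : IsOpen s) (hsU : s ⊆ U) : IsOpen (g '' s) := by
  refine isOpen_iff_mem_nhds.mpr ?_
  rintro _ ⟨z, hz, rfl⟩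
  have hzU : U ∈ 𝓝 z := hU.mem_nhds (hsU hz)
  exact (hg.analyticAt hzU).eventually_constant_or_nhds_le_map_nhds.resolve_left
    (not_eventually_eq_of_injOn hzU hinj) (image_mem_map (hs.mem_nhds hz))

theorem eventually_deriv_ne_zero_of_injOn (hg : DifferentiableOn ℂ g U) (hinj : InjOn g U)
    {z₀ : ℂ} (hU : U ∈ 𝓝 z₀) : ∀ᶠ z in 𝓝[≠] z₀, deriv g z ≠ 0 := by
  refine (hg.analyticAt hU).deriv.eventually_eq_zero_or_eventually_ne_zero.resolve_left
    fun hzero ↦ not_eventually_eq_of_injOn hU hinj ?_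
  obtain ⟨δ, hδ, hball⟩ := Metric.eventually_nhds_iff_ball.mp (hzero.and hU)
  filter_upwards [ball_mem_nhds z₀ hδ] with z hz
  exact isOpen_ball.is_const_of_deriv_eq_zero (convex_ball z₀ δ).isPreconnected
    (hg.mono fun w hw ↦ (hball w hw).2) (fun w hw ↦ (hball w hw).1) hz (mem_ball_self hδ)

theorem continuousOn_invFunOn_image (hg : DifferentiableOn ℂ g U) (hU : IsOpen U)
    (hinj : InjOn g U) : ContinuousOn (invFunOn g U) (g '' U) := by
  rw [continuousOn_open_iff (isOpen_image_of_injOn hg hU hinj hU subset_rfl)]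
  intro V hV
  convert isOpen_image_of_injOn hg hU hinj (hU.inter hV) inter_subset_left using 1
  ext w
  constructor
  · rintro ⟨⟨z, hz, rfl⟩, hzV⟩
    exact ⟨z, ⟨hz, by rwa [mem_preimage, hinj.leftInvOn_invFunOn hz] at hzV⟩, rfl⟩
  · rintro ⟨z, ⟨hz, hzV⟩, rfl⟩
    exact ⟨mem_image_of_mem g hz, by rwa [mem_preimage, hinj.leftInvOn_invFunOn hz]⟩

theorem differentiableOn_invFunOn_image (hg : DifferentiableOn ℂ g U) (hU : IsOpen U)
    (hinj : InjOn g U) : DifferentiableOn ℂ (invFunOn g U) (g '' U) := by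
  set ψ := invFunOn g U
  have hΩ : IsOpen (g '' U) := isOpen_image_of_injOn hg hU hinj hU subset_rfl
  have hcont : ∀ w ∈ g '' U, ContinuousAt ψ w := fun w hw ↦
    (continuousOn_invFunOn_image hg hU hinj).continuousAt (hΩ.mem_nhds hw)
  have hright : ∀ w ∈ g '' U, g (ψ w) = w := fun w hw ↦ invFunOn_eq hw
  have hmem : ∀ w ∈ g '' U, ψ w ∈ U := fun w hw ↦ invFunOn_mem hw
  have hregular : ∀ w ∈ g '' U, deriv g (ψ w) ≠ 0 → DifferentiableAt ℂ ψ w := fun w hw hne ↦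
    (HasDerivAt.of_local_left_inverse (hcont w hw)
      (hg.differentiableAt (hU.mem_nhds (hmem w hw))).hasDerivAt hne
      (eventually_of_mem (hΩ.mem_nhds hw) hright)).differentiableAt
  intro w hw
  have hpunctured : Tendsto ψ (𝓝[≠] w) (𝓝[≠] ψ w) := by
    refine tendsto_nhdsWithin_of_tendsto_nhds_of_eventually_within _
      ((hcont w hw).mono_left nhdsWithin_le_nhds) ?_
    filter_upwards [self_mem_nhdsWithin, nhdsWithin_le_nhds (hΩ.mem_nhds hw)] with y hy hyΩ heq
    exact hy ((hright y hyΩ).symm.trans ((congrArg g heq).trans (hright w hw)))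
  -- the critical points of `g` are isolated, so `ψ` has at most a removable singularity at `w`
  have hdiff_punctured : ∀ᶠ y in 𝓝[≠] w, DifferentiableAt ℂ ψ y := by
    filter_upwards [hpunctured.eventually
        (eventually_deriv_ne_zero_of_injOn hg hinj (hU.mem_nhds (hmem w hw))),
      nhdsWithin_le_nhds (hΩ.mem_nhds hw)] with y hy hyΩ
    exact hregular y hyΩ hy
  exact (Complex.analyticAt_of_differentiable_on_punctured_nhds_of_continuousAt hdiff_punctured
    (hcont w hw)).differentiableAt.differentiableWithinAt

end InverseOfInjective

theorem norm_deriv_le_of_mapsTo_image {G g : ℂ → ℂ} {c : ℂ} {R : ℝ} (hR : 0 < R)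
    (hG : DifferentiableOn ℂ G (ball c R)) (hg : DifferentiableOn ℂ g (ball c R))
    (hinj : InjOn g (ball c R)) (hmaps : MapsTo G (ball c R) (g '' ball c R)) (hc : G c = g c) :
    ‖deriv G c‖ ≤ ‖deriv g c‖ := by
  set ψ := invFunOn g (ball c R)
  have hcR : c ∈ ball c R := mem_ball_self hR
  have hψ : DifferentiableOn ℂ ψ (g '' ball c R) :=
    differentiableOn_invFunOn_image hg isOpen_ball hinj
  have hψc : ψ (g c) = c := hinj.leftInvOn_invFunOn hcR
  have hψd : DifferentiableAt ℂ ψ (G c) := hc ▸ hψ.differentiableAt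
    ((isOpen_image_of_injOn hg isOpen_ball hinj isOpen_ball subset_rfl).mem_nhds
      (mem_image_of_mem g hcR))
  have hgd : DifferentiableAt ℂ g c := hg.differentiableAt (isOpen_ball.mem_nhds hcR)
  have hGd : DifferentiableAt ℂ G c := hG.differentiableAt (isOpen_ball.mem_nhds hcR)
  have hinv : deriv ψ (g c) * deriv g c = 1 := by
    have hleft : ψ ∘ g =ᶠ[𝓝 c] id :=
      eventually_of_mem (isOpen_ball.mem_nhds hcR) fun z hz ↦ hinj.leftInvOn_invFunOn hz
    rw [← deriv_comp c (hc ▸ hψd) hgd, hleft.deriv_eq, deriv_id]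
  have hschwarz : ‖deriv (ψ ∘ G) c‖ ≤ 1 := by
    refine Complex.norm_deriv_le_one_of_mapsTo_ball (hψ.comp hG hmaps) (fun z hz ↦ ?_) hR
    rw [comp_apply, comp_apply, hc, hψc]
    exact ball_subset_closedBall (invFunOn_mem (hmaps hz))
  rw [deriv_comp c hψd hGd, hc] at hschwarz
  calc ‖deriv G c‖ = ‖deriv g c‖ * ‖deriv ψ (g c) * deriv G c‖ := by
        rw [← norm_mul, ← mul_assoc, mul_comm (deriv g c), hinv, one_mul]
    _ ≤ ‖deriv g c‖ := mul_le_of_le_one_right (norm_nonneg _) hschwarz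

theorem IsPrimitiveRoot.geom_sum_pow_eq {R : Type*} [CommRing R] [IsDomain R] {ε : R} {n : ℕ}
    (hε : IsPrimitiveRoot ε n) (m : ℕ) :
    ∑ k ∈ Finset.range n, (ε ^ m) ^ k = if n ∣ m then (n : R) else 0 := by
  split_ifs with hdvd
  · simp [(hε.pow_eq_one_iff_dvd m).mpr hdvd]
  · refine eq_zero_of_ne_zero_of_mul_right_eq_zero
      (sub_ne_zero.mpr fun h ↦ hdvd ((hε.pow_eq_one_iff_dvd m).mp h)) ?_
    rw [geom_sum_mul, ← pow_mul, mul_comm, pow_mul, hε.pow_eq_one, one_pow, sub_self]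

theorem IsPrimitiveRoot.hasSum_coeff_mul {K : Type*} [Field K] [CharZero K] [TopologicalSpace K]
    [IsTopologicalRing K] {a b : ℕ → K} {ε z : K} {n : ℕ} (hn : 0 < n)
    (hε : IsPrimitiveRoot ε n) (hb : ∀ k < n, HasSum (fun m ↦ a m * (ε ^ k * z) ^ m) (b k)) :
    HasSum (fun j ↦ a (n * j) * (z ^ n) ^ j) ((n : K)⁻¹ * ∑ k ∈ Finset.range n, b k) := by
  have hfilter : ∀ m, (n : K)⁻¹ * ∑ k ∈ Finset.range n, a m * (ε ^ k * z) ^ m =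
      if n ∣ m then a m * z ^ m else 0 := fun m ↦ by
    calc (n : K)⁻¹ * ∑ k ∈ Finset.range n, a m * (ε ^ k * z) ^ m
        = (n : K)⁻¹ * (a m * z ^ m) * ∑ k ∈ Finset.range n, (ε ^ m) ^ k := by
          simp_rw [Finset.mul_sum, mul_pow, ← pow_mul, mul_comm _ m, pow_mul]
          exact Finset.sum_congr rfl fun _ _ ↦ by ring
      _ = if n ∣ m then a m * z ^ m else 0 := by
          have hn' : (n : K) ≠ 0 := Nat.cast_ne_zero.mpr hn.ne'
          rw [hε.geom_sum_pow_eq]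
          split_ifs
          · field_simp
          · rw [mul_zero]
  have hsum := (hasSum_sum fun k hk ↦ hb k (Finset.mem_range.mp hk)).mul_left (n : K)⁻¹
  simp_rw [hfilter] at hsum
  have hinj : Injective (n * ·) := fun _ _ h ↦ Nat.eq_of_mul_eq_mul_left hn h
  rw [← hinj.hasSum_iff fun m hm ↦ if_neg fun ⟨j, hj⟩ ↦ hm ⟨j, hj.symm⟩] at hsum
  simpa [comp_def, pow_mul] using hsum

theorem Convex.exists_mem_hasSum_coeff_mul {S : Set ℂ} (hS : Convex ℝ S) {f : ℂ → ℂ}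
    {a : ℕ → ℂ} (hf : MapsTo f (ball 0 1) S)
    (ha : ∀ z ∈ ball (0 : ℂ) 1, HasSum (fun m ↦ a m * z ^ m) (f z)) {n : ℕ} (hn : 0 < n)
    {w : ℂ} (hw : w ∈ ball (0 : ℂ) 1) : ∃ v ∈ S, HasSum (fun j ↦ a (n * j) * w ^ j) v := by
  obtain ⟨z, rfl⟩ := IsAlgClosed.exists_pow_nat_eq w hn
  set ε := Complex.exp (2 * Real.pi * Complex.I / n)
  have hε : IsPrimitiveRoot ε n := Complex.isPrimitiveRoot_exp n hn.ne'
  have hrot : ∀ k : ℕ, ε ^ k * z ∈ ball (0 : ℂ) 1 := fun k ↦ by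
    rw [mem_ball_zero_iff, norm_pow] at hw
    rw [mem_ball_zero_iff, norm_mul, norm_pow, hε.norm'_eq_one hn.ne', one_pow, one_mul]
    exact (pow_lt_one_iff_of_nonneg (norm_nonneg z) hn.ne').mp hw
  refine ⟨_, ?_, hε.hasSum_coeff_mul hn fun k _ ↦ ha _ (hrot k)⟩
  -- the average of the rotated values `f (ε ^ k * z)` is a convex combination of points of `S`
  have hn' : (n : ℝ) ≠ 0 := Nat.cast_ne_zero.mpr hn.ne'
  rw [Finset.mul_sum]
  simp_rw [← Complex.ofReal_natCast, ← Complex.ofReal_inv, ← Complex.real_smul]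
  exact hS.sum_mem (fun _ _ ↦ by positivity) (by simp [hn']) fun k _ ↦ hf (hrot k)

theorem hasFPowerSeriesOnBall_ofScalars_of_hasSum_s17 {𝕜 : Type*} [RCLike 𝕜]
    {c : ℕ → 𝕜} {G : 𝕜 → 𝕜} {r : NNReal} (hr : 0 < r)
    (h : ∀ w ∈ ball (0 : 𝕜) r, HasSum (fun j ↦ c j * w ^ j) (G w)) :
    HasFPowerSeriesOnBall G (FormalMultilinearSeries.ofScalars 𝕜 c) 0 r := by
  refine ⟨?_, by exact_mod_cast hr, fun {y} hy ↦ ?_⟩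
  · refine ENNReal.le_of_forall_nnreal_lt fun ρ hρ ↦
      FormalMultilinearSeries.le_radius_of_tendsto _ (l := 0) ?_
    have hρr : ((ρ : ℝ) : 𝕜) ∈ ball (0 : 𝕜) r := by
      simpa [RCLike.norm_ofReal] using hρ
    simpa [FormalMultilinearSeries.ofScalars_norm, RCLike.norm_ofReal] using
      (h _ hρr).summable.tendsto_atTop_zero.norm
  · rw [eball_coe] at hy
    simpa [FormalMultilinearSeries.ofScalars_apply_eq, mul_comm] using h y (by simpa using hy)

theorem coeff_zero_eq_of_hasSum {𝕜 : Type*} [NormedField 𝕜] {a : ℕ → 𝕜} {s : 𝕜}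
    (h : HasSum (fun n ↦ a n * 0 ^ n) s) : a 0 = s := by
  simpa using (hasSum_single (f := fun n ↦ a n * 0 ^ n) 0 fun n hn ↦ by simp [hn]).unique h

theorem norm_coeff_le_norm_deriv_of_convex {g f : ℂ → ℂ} {a : ℕ → ℂ}
    (hg : DifferentiableOn ℂ g (ball 0 1)) (hinj : InjOn g (ball 0 1))
    (hconv : Convex ℝ (g '' ball 0 1)) (hf : MapsTo f (ball 0 1) (g '' ball 0 1))
    (hf0 : f 0 = g 0) (ha : ∀ z ∈ ball (0 : ℂ) 1, HasSum (fun m ↦ a m * z ^ m) (f z))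
    {n : ℕ} (hn : 0 < n) : ‖a n‖ ≤ ‖deriv g 0‖ := by
  set G : ℂ → ℂ := fun w ↦ ∑' j, a (n * j) * w ^ j
  have hG : ∀ w ∈ ball (0 : ℂ) 1,
      HasSum (fun j ↦ a (n * j) * w ^ j) (G w) ∧ G w ∈ g '' ball 0 1 := fun w hw ↦ by
    obtain ⟨v, hv, hsum⟩ := hconv.exists_mem_hasSum_coeff_mul hf ha hn hw
    rw [show G w = v from hsum.tsum_eq]
    exact ⟨hsum, hv⟩
  have hGps := hasFPowerSeriesOnBall_ofScalars_of_hasSum_s17 one_pos fun w hw ↦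
    (hG w (by simpa using hw)).1
  have hG0 : G 0 = g 0 := by
    rw [← coeff_zero_eq_of_hasSum (hG 0 (mem_ball_self one_pos)).1, mul_zero,
      coeff_zero_eq_of_hasSum (ha 0 (mem_ball_self one_pos)), hf0]
  have hGd : deriv G 0 = a n := by simpa using hGps.hasFPowerSeriesAt.deriv
  rw [← hGd]
  have hGdiff := hGps.differentiableOn
  rw [eball_coe, NNReal.coe_one] at hGdiff
  exact norm_deriv_le_of_mapsTo_image one_pos hGdiff hg hinj (fun w hw ↦ (hG w hw).2) hG0

theorem majorant_le_of_norm_le {a : ℕ → ℂ} {M r : ℝ} (ha0 : a 0 = 0)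
    (ha : ∀ n, 1 ≤ n → ‖a n‖ ≤ M) (hr0 : 0 ≤ r) (hr1 : r < 1) :
    majorant a r ≤ ENNReal.ofReal (M * r / (1 - r)) := by
  have hM : 0 ≤ M := (norm_nonneg _).trans (ha 1 le_rfl)
  calc majorant a r = ∑' n, (‖a (n + 1)‖₊ : ENNReal) * ENNReal.ofReal r ^ (n + 1) := by
        rw [majorant, tsum_eq_zero_add' ENNReal.summable, ha0, nnnorm_zero, ENNReal.coe_zero,
          zero_mul, zero_add]
    _ ≤ ∑' n, ENNReal.ofReal M * ENNReal.ofReal r ^ (n + 1) := by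
        refine ENNReal.tsum_le_tsum fun n ↦ mul_le_mul_left ?_ _
        rw [← ENNReal.ofReal_coe_nnreal, coe_nnnorm]
        exact ENNReal.ofReal_le_ofReal (ha (n + 1) (Nat.le_add_left 1 n))
    _ = ENNReal.ofReal M * ENNReal.ofReal r * (1 - ENNReal.ofReal r)⁻¹ := by
        rw [ENNReal.tsum_mul_left, ENNReal.tsum_geometric_add_one, mul_assoc]
    _ = ENNReal.ofReal (M * r / (1 - r)) := by
        rw [div_eq_mul_inv, ENNReal.ofReal_mul (by positivity), ENNReal.ofReal_mul hM,
          ENNReal.ofReal_inv_of_pos (by linarith), ENNReal.ofReal_sub 1 hr0, ENNReal.ofReal_one]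

theorem rogosinski_convex_subordination_general (g φ f0 : ℂ → ℂ) (a : ℕ → ℂ)
    (hg : DifferentiableOn ℂ g (ball 0 1))
    (hginj : Set.InjOn g (ball 0 1))
    (hconv : Convex ℝ ((fun z => g z) '' (ball 0 1)))
    (hg0 : g 0 = 0)
    (hφmap : ∀ z ∈ ball (0:ℂ) 1, φ z ∈ ball (0:ℂ) 1)
    (hsub : ∀ z ∈ ball (0:ℂ) 1, f0 z = g (φ z))
    (hf00 : f0 0 = 0)
    (ha : ∀ z ∈ ball (0:ℂ) 1, HasSum (fun n => a n * z ^ n) (f0 z)) :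
    (∀ n, 1 ≤ n → ‖a n‖ ≤ ‖deriv g 0‖) ∧
    (∀ r : ℝ, 0 ≤ r → r < 1 →
      majorant a r ≤ ENNReal.ofReal (‖deriv g 0‖ * r / (1 - r))) := by
  have hf0 : MapsTo f0 (ball 0 1) (g '' ball 0 1) := fun z hz ↦
    hsub z hz ▸ mem_image_of_mem g (hφmap z hz)
  have hcoeff : ∀ n, 1 ≤ n → ‖a n‖ ≤ ‖deriv g 0‖ := fun n hn ↦
    norm_coeff_le_norm_deriv_of_convex hg hginj hconv hf0 (hf00.trans hg0.symm) ha hn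
  have ha0 : a 0 = 0 := (coeff_zero_eq_of_hasSum (ha 0 (mem_ball_self one_pos))).trans hf00
  exact ⟨hcoeff, fun r hr0 hr1 ↦ majorant_le_of_norm_le ha0 hcoeff hr0 hr1⟩

theorem rogosinski_convex_subordination (g φ f0 : ℂ → ℂ) (a : ℕ → ℂ)
    (hg : DifferentiableOn ℂ g (ball 0 1))
    (hginj : Set.InjOn g (ball 0 1))
    (hconv : Convex ℝ ((fun z => g z) '' (ball 0 1)))
    (hg0 : g 0 = 0)
    (hφ : DifferentiableOn ℂ φ (ball 0 1))
    (hφmap : ∀ z ∈ ball (0:ℂ) 1, φ z ∈ ball (0:ℂ) 1)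
    (hφ0 : φ 0 = 0)
    (hsub : ∀ z ∈ ball (0:ℂ) 1, f0 z = g (φ z))
    (hf00 : f0 0 = 0)
    (ha : ∀ z ∈ ball (0:ℂ) 1, HasSum (fun n => a n * z ^ n) (f0 z)) :
    (∀ n, 1 ≤ n → ‖a n‖ ≤ ‖deriv g 0‖) ∧
    (∀ r : ℝ, 0 ≤ r → r < 1 →
      majorant a r ≤ ENNReal.ofReal (‖deriv g 0‖ * r / (1 - r))) :=
  rogosinski_convex_subordination_general g φ f0 a hg hginj hconv hg0 hφmap hsub hf00 ha
end
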